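/- arXiv:1703.05684 — 2 statements merged into one kernel-verified Lean document; each statement's English description precedes it below -/
import Mathlib

section
/- For every graph H containing no induced cycle, no induced claw K_{1,3}, and no induced copy of 2P2+P1 (the disjoint union of two edges and an isolated vertex), one of the following holds: H is isomorphic to 2P3 (the disjoint union of two 3-vertex paths); H is an induced subgraph of P6; or there exists k ≥ 0 such that H is an induced subgraph of P4 + kP1 (a 4-vertex path plus k isolated vertices). -/
/-!
In a graph with no induced cycle and no induced claw, a longest induced path `P` has no neighbour
outside it: a neighbour of an interior vertex of `P` yields a triangle or a claw, a neighbour of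
exactly one end extends `P`, and a common neighbour of both ends closes an induced cycle. Hence
`H ≅ P_m + H[R]` with `R` the vertices off `P`, and the same holds inside `H[R]`. Excluding
`2P2 + P1` leaves few options: if `R` spans no edge, then `H ≅ P_m + kP1` with `m ≤ 6` if `k = 0`
and `m ≤ 4` otherwise; if it does, `H[R]` is a single path `P_n` with `2 ≤ n ≤ m ≤ 3`, so `H` is
`2P3` or an induced subgraph of `P6`.
-/

open SimpleGraph

/-- The claw `K_{1,3}`: vertex `0` adjacent to `1`, `2`, `3`. -/
def clawGraph : SimpleGraph (Fin 4) :=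
  SimpleGraph.fromRel (fun a b => a = 0 ∧ b ≠ 0)

/-- `2P2 + P1`: the disjoint union of two edges and an isolated vertex. -/
def twoP2P1 : SimpleGraph (Fin 5) :=
  SimpleGraph.fromRel (fun a b => (a = 0 ∧ b = 1) ∨ (a = 2 ∧ b = 3))

/-- `2P3`: the disjoint union of two paths on three vertices. -/
def twoP3 : SimpleGraph (Fin 6) :=
  SimpleGraph.fromRel (fun a b =>
    (a = 0 ∧ b = 1) ∨ (a = 1 ∧ b = 2) ∨ (a = 3 ∧ b = 4) ∨ (a = 4 ∧ b = 5))

/-- `P4 + kP1`: a path on four vertices together with `k` isolated vertices. -/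
def P4kP1 (k : ℕ) : SimpleGraph (Fin (4 + k)) :=
  SimpleGraph.fromRel (fun a b => a.val + 1 = b.val ∧ b.val < 4)

namespace SimpleGraph

variable {V W X Y : Type*} {G : SimpleGraph V}

theorem pathGraph_two_isIndContained_of_adj {a b : V} (hab : G.Adj a b) : pathGraph 2 ⊴ G := by
  have : ¬ G.CliqueFree 2 := fun h => by simp [cliqueFree_two.1 h] at hab
  rw [pathGraph_two_eq_top]
  exact ⟨topEmbeddingOfNotCliqueFree this⟩

theorem cycleGraph_three_isIndContained_of_adj {a b c : V} (hab : G.Adj a b) (hac : G.Adj a c)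
    (hbc : G.Adj b c) : cycleGraph 3 ⊴ G := by
  classical
  rw [cycleGraph_three_eq_top]
  exact ⟨topEmbeddingOfNotCliqueFree (is3Clique_triple_iff.2 ⟨hab, hac, hbc⟩).not_cliqueFree⟩

theorem clawGraph_isIndContained_of_adj {c x y z : V} (hx : G.Adj c x) (hy : G.Adj c y)
    (hz : G.Adj c z) (hxy : x ≠ y) (hxz : x ≠ z) (hyz : y ≠ z) (nxy : ¬ G.Adj x y)
    (nxz : ¬ G.Adj x z) (nyz : ¬ G.Adj y z) : clawGraph ⊴ G := by
  refine ⟨⟨⟨![c, x, y, z], ?_⟩, ?_⟩⟩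
  · intro i j hij
    fin_cases i <;> fin_cases j <;> simp_all [hx.ne, hy.ne, hz.ne]
  · intro i j
    change G.Adj (![c, x, y, z] i) (![c, x, y, z] j) ↔ _
    fin_cases i <;> fin_cases j <;> simp_all [clawGraph, fromRel_adj, G.adj_comm]

theorem IsIndContained.sum {G : SimpleGraph V} {G' : SimpleGraph W} {H : SimpleGraph X}
    {H' : SimpleGraph Y} : G ⊴ G' → H ⊴ H' → G ⊕g H ⊴ G' ⊕g H'
  | ⟨f⟩, ⟨g⟩ => ⟨f.sum g⟩

theorem bot_isIndContained_bot_iff :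
    (⊥ : SimpleGraph V) ⊴ (⊥ : SimpleGraph W) ↔ Nonempty (V ↪ W) := by
  rw [← compl_isIndContained_compl, compl_bot, compl_bot, top_isIndContained_top_iff]

def Iso.sumEmpty (G : SimpleGraph V) (H : SimpleGraph W) [IsEmpty W] : G ⊕g H ≃g G :=
  ⟨Equiv.sumEmpty V W, by rintro (v | w) (v' | w') <;> first | exact isEmptyElim ‹W› | simp⟩

def Iso.sumInduceCompl (s : Set V) [DecidablePred (· ∈ s)] (h : ∀ v ∈ s, ∀ w ∉ s, ¬ G.Adj v w) :
    G.induce s ⊕g G.induce sᶜ ≃g G :=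
  ⟨Equiv.Set.sumCompl s, by
    rintro (⟨v, hv⟩ | ⟨v, hv⟩) (⟨w, hw⟩ | ⟨w, hw⟩)
    · simp
    · simpa using h v hv w hw
    · simpa [G.adj_comm] using h w hw v hv
    · simp⟩

theorem pathGraph_isIndContained_pathGraph {m n : ℕ} (h : m ≤ n) : pathGraph m ⊴ pathGraph n :=
  ⟨⟨Fin.castLEEmb h, by simp [pathGraph_adj]⟩⟩

def pathGraph.revIso (n : ℕ) : pathGraph n ≃g pathGraph n :=
  ⟨Fin.revPerm, by intro a b; simp only [Fin.revPerm_apply, pathGraph_adj, Fin.val_rev]; omega⟩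

theorem pathGraph_sum_pathGraph_isIndContained (m n : ℕ) :
    pathGraph m ⊕g pathGraph n ⊴ pathGraph (m + 1 + n) := by
  refine ⟨⟨⟨Sum.elim (Fin.castLE (by omega)) (Fin.natAdd (m + 1)),
    (Fin.castLE_injective _).sumElim (Fin.natAdd_injective _ _) fun i j => ?_⟩, ?_⟩⟩
  · simp [Fin.ext_iff]; omega
  · rintro (i | j) (i' | j') <;> simp [pathGraph_adj] <;> omega

theorem pathGraph_one_isIndContained (H : SimpleGraph W) [Nonempty W] : pathGraph 1 ⊴ H :=
  ⟨⟨⟨fun _ => Classical.arbitrary W, fun i j _ => Subsingleton.elim i j⟩, by simp [pathGraph_adj]⟩⟩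

theorem isIndContained_of_snoc {m : ℕ} {F : SimpleGraph (Fin (m + 1))}
    {F' : SimpleGraph (Fin m)} (p : F' ↪g G) {v : V} (hv : v ∉ Set.range p)
    (hF : ∀ i j, F.Adj i.castSucc j.castSucc ↔ F'.Adj i j)
    (hlast : ∀ i, F.Adj (Fin.last m) i.castSucc ↔ G.Adj v (p i)) : F ⊴ G := by
  refine ⟨⟨⟨Fin.snoc (α := fun _ => V) p v, Fin.snoc_injective_iff.2 ⟨p.injective, hv⟩⟩, ?_⟩⟩
  intro a b
  induction a using Fin.lastCases <;> induction b using Fin.lastCases <;>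
    simp [hF, hlast, F.adj_comm _ (Fin.last m), G.adj_comm _ v]

theorem cycleGraph_adj_iff_val {n : ℕ} (hn : 2 ≤ n) {u v : Fin n} :
    (cycleGraph n).Adj u v ↔ (u : ℕ) + 1 = v ∨ (v : ℕ) + 1 = u ∨
      (u : ℕ) = 0 ∧ (v : ℕ) + 1 = n ∨ (v : ℕ) = 0 ∧ (u : ℕ) + 1 = n := by
  rw [cycleGraph_adj']
  rcases lt_trichotomy u v with h | rfl | h
  · rw [Fin.coe_sub_iff_lt.2 h, Fin.sub_val_of_le h.le]; omega
  · rw [Fin.sub_val_of_le le_rfl]; omega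
  · rw [Fin.sub_val_of_le h.le, Fin.coe_sub_iff_lt.2 h]; omega

theorem pathGraph_succ_isIndContained {m : ℕ} (p : pathGraph m ↪g G) {v : V}
    (hv : v ∉ Set.range p) (h : ∀ i, G.Adj v (p i) ↔ (i : ℕ) + 1 = m) :
    pathGraph (m + 1) ⊴ G :=
  isIndContained_of_snoc p hv (fun i j => by simp [pathGraph_adj])
    (fun i => by simp [pathGraph_adj, h]; omega)

theorem cycleGraph_succ_isIndContained {m : ℕ} (hm : 2 ≤ m) (p : pathGraph m ↪g G) {v : V}
    (hv : v ∉ Set.range p) (h : ∀ i, G.Adj v (p i) ↔ (i : ℕ) = 0 ∨ (i : ℕ) + 1 = m) :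
    cycleGraph (m + 1) ⊴ G :=
  isIndContained_of_snoc p hv
    (fun i j => by rw [cycleGraph_adj_iff_val (by omega), pathGraph_adj]; simp; omega)
    (fun i => by rw [cycleGraph_adj_iff_val (by omega), h]; simp; omega)

theorem endpoint_of_adj_of_notMem_range (hK3 : ¬ cycleGraph 3 ⊴ G) (hclaw : ¬ clawGraph ⊴ G)
    {m : ℕ} (p : pathGraph m ↪g G) {v : V} (hv : v ∉ Set.range p) {i : Fin m}
    (hvi : G.Adj v (p i)) : (i : ℕ) = 0 ∨ (i : ℕ) + 1 = m := by
  by_contra! hi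
  have hadj : ∀ {j k : Fin m}, (j : ℕ) + 1 = k → G.Adj (p j) (p k) :=
    fun h => p.map_adj_iff.2 (pathGraph_adj.2 (Or.inl h))
  let a : Fin m := ⟨i - 1, by omega⟩
  let b : Fin m := ⟨i + 1, by omega⟩
  have hai : G.Adj (p a) (p i) := hadj (by simp only [a]; omega)
  have hib : G.Adj (p i) (p b) := hadj rfl
  have hva : ¬ G.Adj v (p a) := fun h => hK3 (cycleGraph_three_isIndContained_of_adj h hvi hai)
  have hvb : ¬ G.Adj v (p b) := fun h => hK3 (cycleGraph_three_isIndContained_of_adj hvi h hib)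
  have hab : ¬ G.Adj (p a) (p b) := by
    rw [p.map_adj_iff, pathGraph_adj]; simp only [a, b]; omega
  have hne : p a ≠ p b := p.injective.ne (by simp only [a, b, ne_eq, Fin.ext_iff]; omega)
  exact hclaw (clawGraph_isIndContained_of_adj hvi.symm hai.symm hib
    (fun h => hv ⟨a, h.symm⟩) (fun h => hv ⟨b, h.symm⟩) hne hva hvb hab)

theorem not_adj_of_notMem_range_of_longest (hcyc : ∀ n, 3 ≤ n → ¬ cycleGraph n ⊴ G)
    (hclaw : ¬ clawGraph ⊴ G) {m : ℕ} (p : pathGraph m ↪g G) (hmax : ¬ pathGraph (m + 1) ⊴ G)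
    {v : V} (hv : v ∉ Set.range p) (i : Fin m) : ¬ G.Adj v (p i) := by
  intro hvi
  obtain ⟨k, rfl⟩ : ∃ k, m = k + 1 := ⟨m - 1, by have := i.pos; omega⟩
  have hnbr : ∀ j : Fin (k + 1), G.Adj v (p j) ↔
      j = 0 ∧ G.Adj v (p 0) ∨ j = Fin.last k ∧ G.Adj v (p (Fin.last k)) := by
    refine fun j => ⟨fun h => ?_, by rintro (⟨rfl, h⟩ | ⟨rfl, h⟩) <;> exact h⟩
    rcases endpoint_of_adj_of_notMem_range (hcyc 3 le_rfl) hclaw p hv h with h' | h'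
    · obtain rfl : j = 0 := Fin.ext h'
      exact .inl ⟨rfl, h⟩
    · obtain rfl : j = Fin.last k := Fin.ext (by simp; omega)
      exact .inr ⟨rfl, h⟩
  by_cases h0 : G.Adj v (p 0) <;> by_cases hl : G.Adj v (p (Fin.last k))
  · rcases Nat.eq_zero_or_pos k with rfl | hk
    · refine hmax (pathGraph_succ_isIndContained p hv fun j => ?_)
      obtain rfl := Subsingleton.elim j 0
      simpa using h0
    · exact hcyc (k + 2) (by omega) (cycleGraph_succ_isIndContained (by omega) p hv
        fun j => by
          rw [hnbr]
          simp only [h0, hl, and_true, Fin.ext_iff, Fin.val_last, Fin.val_zero]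
          omega)
  · refine hmax (pathGraph_succ_isIndContained (p.comp (pathGraph.revIso _).toEmbedding)
      (fun ⟨j, hj⟩ => hv ⟨_, hj⟩) fun j => ?_)
    change G.Adj v (p j.rev) ↔ _
    rw [hnbr]
    simp [h0, hl, Fin.ext_iff, Fin.val_rev]
    omega
  · exact hmax (pathGraph_succ_isIndContained p hv fun j => by
      rw [hnbr]; simp only [h0, hl, and_false, and_true, false_or, Fin.ext_iff, Fin.val_last]
      omega)
  · rw [hnbr] at hvi
    tauto

theorem exists_longest_pathGraph [Finite V] (G : SimpleGraph V) :
    ∃ m, pathGraph m ⊴ G ∧ ∀ k, pathGraph k ⊴ G → k ≤ m := by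
  classical
  have hbdd : ∀ k, pathGraph k ⊴ G → k ≤ Nat.card V := fun k ⟨f⟩ => by
    simpa using Nat.card_le_card_of_injective f f.injective
  exact ⟨_, Nat.findGreatest_spec (P := fun k => pathGraph k ⊴ G) (Nat.zero_le _)
    IsIndContained.of_isEmpty, fun k hk => Nat.le_findGreatest (hbdd k hk) hk⟩

theorem exists_pathGraph_sum_iso [Finite V] (hcyc : ∀ n, 3 ≤ n → ¬ cycleGraph n ⊴ G)
    (hclaw : ¬ clawGraph ⊴ G) :
    ∃ (m : ℕ) (s : Set V), (∀ k, pathGraph k ⊴ G → k ≤ m) ∧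
      Nonempty (pathGraph m ⊕g G.induce s ≃g G) := by
  classical
  obtain ⟨m, ⟨p⟩, hm⟩ := exists_longest_pathGraph G
  have hmax : ¬ pathGraph (m + 1) ⊴ G := fun h => by have := hm _ h; omega
  refine ⟨m, (Set.range p)ᶜ, hm,
    ⟨(Iso.sumCongr p.isoInduceRange Iso.refl).trans (Iso.sumInduceCompl _ ?_)⟩⟩
  rintro _ ⟨i, rfl⟩ v hv hadj
  exact not_adj_of_notMem_range_of_longest hcyc hclaw p hmax hv i hadj.symm

end SimpleGraph

def sumIsoTwoP2P1 : pathGraph 2 ⊕g (pathGraph 2 ⊕g pathGraph 1) ≃g twoP2P1 :=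
  ⟨(Equiv.sumCongr (Equiv.refl _) finSumFinEquiv).trans finSumFinEquiv, by
    rintro (i | i | i) (j | j | j) <;> fin_cases i <;> fin_cases j <;>
      simp only [twoP2P1, fromRel_adj, sum_adj, pathGraph_adj] <;> decide⟩

def sumIsoTwoP3 : pathGraph 3 ⊕g pathGraph 3 ≃g twoP3 :=
  ⟨finSumFinEquiv, by
    rintro (i | i) (j | j) <;> fin_cases i <;> fin_cases j <;>
      simp only [twoP3, fromRel_adj, sum_adj, pathGraph_adj] <;> decide⟩

def sumIsoP4kP1 (k : ℕ) : pathGraph 4 ⊕g (⊥ : SimpleGraph (Fin k)) ≃g P4kP1 k :=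
  ⟨finSumFinEquiv, by
    rintro (i | i) (j | j) <;> simp [P4kP1, fromRel_adj, pathGraph_adj, Fin.ext_iff] <;> omega⟩

theorem twoP2P1_isIndContained_pathGraph_seven : twoP2P1 ⊴ pathGraph 7 :=
  sumIsoTwoP2P1.isIndContained'.trans <|
    (IsIndContained.rfl.sum (pathGraph_sum_pathGraph_isIndContained 2 1)).trans
      (pathGraph_sum_pathGraph_isIndContained 2 4)

theorem twoP2P1_isIndContained_pathGraph_five_sum {W : Type*} [Nonempty W] (H : SimpleGraph W) :
    twoP2P1 ⊴ pathGraph 5 ⊕g H :=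
  sumIsoTwoP2P1.isIndContained'.trans <| Iso.sumAssoc.isIndContained'.trans <|
    (pathGraph_sum_pathGraph_isIndContained 2 2).sum (pathGraph_one_isIndContained H)

theorem twoP2P1_isIndContained_pathGraph_four_sum_two : twoP2P1 ⊴ pathGraph 4 ⊕g pathGraph 2 :=
  sumIsoTwoP2P1.isIndContained'.trans <| Iso.sumComm.isIndContained.trans <|
    (pathGraph_sum_pathGraph_isIndContained 2 1).sum IsIndContained.rfl

theorem isIndContained_pathGraph_six_or_P4kP1_of_sum_bot {W : Type*} [Finite W] {m : ℕ}
    (h : ¬ twoP2P1 ⊴ pathGraph m ⊕g (⊥ : SimpleGraph W)) :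
    pathGraph m ⊕g (⊥ : SimpleGraph W) ⊴ pathGraph 6 ∨
      ∃ k, pathGraph m ⊕g (⊥ : SimpleGraph W) ⊴ P4kP1 k := by
  obtain ⟨k, ⟨e⟩⟩ := Finite.exists_equiv_fin W
  cases isEmpty_or_nonempty W
  · have hm : m ≤ 6 := by
      by_contra! hm
      exact h (twoP2P1_isIndContained_pathGraph_seven.trans
        ((pathGraph_isIndContained_pathGraph hm).trans Embedding.sumInl.isIndContained))
    exact .inl ((Iso.sumEmpty _ _).isIndContained.trans (pathGraph_isIndContained_pathGraph hm))
  · have hm : m ≤ 4 := by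
      by_contra! hm
      exact h ((twoP2P1_isIndContained_pathGraph_five_sum _).trans
        ((pathGraph_isIndContained_pathGraph hm).sum IsIndContained.rfl))
    exact .inr ⟨k, ((pathGraph_isIndContained_pathGraph hm).sum
      (bot_isIndContained_bot_iff.2 ⟨e.toEmbedding⟩)).trans (sumIsoP4kP1 k).isIndContained⟩

theorem iso_twoP3_or_isIndContained_pathGraph_six_of_sum_sum {W : Type*} {m n : ℕ}
    (hn : 2 ≤ n) (hnm : n ≤ m) (Y : SimpleGraph W)
    (h : ¬ twoP2P1 ⊴ pathGraph m ⊕g (pathGraph n ⊕g Y)) :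
    Nonempty (pathGraph m ⊕g (pathGraph n ⊕g Y) ≃g twoP3) ∨
      pathGraph m ⊕g (pathGraph n ⊕g Y) ⊴ pathGraph 6 := by
  have : IsEmpty W := by
    by_contra! hW
    exact h (sumIsoTwoP2P1.isIndContained'.trans
      ((pathGraph_isIndContained_pathGraph (by omega)).sum
        ((pathGraph_isIndContained_pathGraph hn).sum (pathGraph_one_isIndContained Y))))
  have hm : m ≤ 3 := by
    by_contra! hm
    exact h (twoP2P1_isIndContained_pathGraph_four_sum_two.trans
      ((pathGraph_isIndContained_pathGraph hm).sum
        ((pathGraph_isIndContained_pathGraph hn).trans Embedding.sumInl.isIndContained)))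
  have e : pathGraph m ⊕g (pathGraph n ⊕g Y) ≃g pathGraph m ⊕g pathGraph n :=
    Iso.sumCongr Iso.refl (Iso.sumEmpty _ _)
  by_cases h33 : m = 3 ∧ n = 3
  · obtain ⟨rfl, rfl⟩ := h33
    exact .inl ⟨e.trans sumIsoTwoP3⟩
  · exact .inr (e.isIndContained.trans ((pathGraph_sum_pathGraph_isIndContained m n).trans
      (pathGraph_isIndContained_pathGraph (by omega))))

theorem stmt_7 {V : Type*} [Fintype V] (H : SimpleGraph V)
    (hcyc : ∀ n, 3 ≤ n → ¬ Nonempty (cycleGraph n ↪g H))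
    (hclaw : ¬ Nonempty (clawGraph ↪g H))
    (h2P2P1 : ¬ Nonempty (twoP2P1 ↪g H)) :
    Nonempty (H ≃g twoP3) ∨ Nonempty (H ↪g pathGraph 6) ∨
      ∃ k : ℕ, Nonempty (H ↪g P4kP1 k) := by
  obtain ⟨m, R, hm, ⟨e⟩⟩ := exists_pathGraph_sum_iso hcyc hclaw
  have hR : H.induce R ⊴ H := (Embedding.induce R).isIndContained
  obtain ⟨n, S, hn, ⟨e'⟩⟩ := exists_pathGraph_sum_iso (G := H.induce R)
    (fun k hk h => hcyc k hk (h.trans hR)) (fun h => hclaw (h.trans hR))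
  rcases le_or_gt n 1 with hn1 | hn2
  · have hbot : H.induce R = ⊥ := by
      ext a b
      refine iff_of_false (fun hab => ?_) id
      have := hn 2 (pathGraph_two_isIndContained_of_adj hab)
      omega
    rw [hbot] at e
    rcases isIndContained_pathGraph_six_or_P4kP1_of_sum_bot
      fun h => h2P2P1 (h.trans e.isIndContained) with h | ⟨k, h⟩
    · exact .inr (.inl (e.symm.isIndContained.trans h))
    · exact .inr (.inr ⟨k, e.symm.isIndContained.trans h⟩)
  · have hnm : n ≤ m := hm n ((Embedding.sumInl.isIndContained.trans e'.isIndContained).trans hR)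
    have e'' : pathGraph m ⊕g (pathGraph n ⊕g (H.induce R).induce S) ≃g H :=
      (Iso.sumCongr Iso.refl e').trans e
    rcases iso_twoP3_or_isIndContained_pathGraph_six_of_sum_sum hn2 hnm _
      fun h => h2P2P1 (h.trans e''.isIndContained) with ⟨⟨f⟩⟩ | h
    · exact .inl ⟨e''.symm.trans f⟩
    · exact .inr (.inl (e''.symm.isIndContained.trans h))
end

section
/- For every r ≥ 2, the graph H_r (on v_1,…,v_{3r−1} with path edges v_i v_{i+1} and chords v_i v_j for i ≤ j−2, i ≡ 2 (mod 3), j ≡ 1 (mod 3)) contains no induced subgraph isomorphic to 2P3, the disjoint union of two paths each on 3 vertices. -/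
/-!
Vertices are numbered `0, …, 3r - 2`. The vertices not divisible by `3` induce a matching, so no
induced `P₃` lies among them. A vertex `u ≡ 1 (mod 3)` is adjacent to every multiple of `3` from
`u - 1` on; hence if the image of an induced `2P₃` contains such a `u` but no multiple of `3`
below `u - 1`, the path of `2P₃` not containing the preimage of `u` avoids the multiples of `3`,
which is impossible. This rules out the vertices `0`, `1` and `2` (the latter through the
vertex `4`), so the copy of `2P₃` lives on `{3, …, 3r - 2}`, which induces a copy of `H_{r-1}`.
-/

def obstGraph (r : ℕ) : SimpleGraph (Fin (3 * r - 1)) :=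
  SimpleGraph.fromRel (fun a b =>
    a.val + 1 = b.val ∨ (a.val + 2 ≤ b.val ∧ a.val % 3 = 1 ∧ b.val % 3 = 0))

section obstGraph

variable {r : ℕ}

theorem obstGraph_adj {a b : Fin (3 * r - 1)} : (obstGraph r).Adj a b ↔
    (a.val + 1 = b.val ∨ (a.val + 2 ≤ b.val ∧ a.val % 3 = 1 ∧ b.val % 3 = 0)) ∨
      (b.val + 1 = a.val ∨ (b.val + 2 ≤ a.val ∧ b.val % 3 = 1 ∧ a.val % 3 = 0)) := by
  rw [obstGraph, SimpleGraph.fromRel_adj]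
  refine ⟨And.right, fun h => ⟨?_, h⟩⟩
  rintro rfl
  omega

theorem obstGraph_adj_of_mod_three {u t : Fin (3 * r - 1)} (hu : u.val % 3 = 1)
    (ht : t.val % 3 = 0) (hut : u.val ≤ t.val + 1) : (obstGraph r).Adj u t := by
  rw [obstGraph_adj]
  omega

theorem obstGraph_eq_of_adj_of_adj {a b c : Fin (3 * r - 1)} (hab : (obstGraph r).Adj a b)
    (hac : (obstGraph r).Adj a c) (ha : a.val % 3 ≠ 0) (hb : b.val % 3 ≠ 0)
    (hc : c.val % 3 ≠ 0) : b = c := by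
  rw [obstGraph_adj] at hab hac
  ext
  omega

theorem nonempty_embedding_obstGraph_of_three_le {V : Type*} {G : SimpleGraph V}
    (f : G ↪g obstGraph (r + 1)) (hf : ∀ v, 3 ≤ (f v).val) : Nonempty (G ↪g obstGraph r) := by
  have hlt : ∀ v, (f v).val - 3 < 3 * r - 1 := fun v => by have := (f v).isLt; have := hf v; omega
  refine ⟨⟨⟨fun v => ⟨(f v).val - 3, hlt v⟩, fun v w hvw => ?_⟩, fun {v w} => ?_⟩⟩
  · have := hf v; have := hf w
    exact f.injective (Fin.ext (by simp only [Fin.mk.injEq] at hvw; omega))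
  · show (obstGraph r).Adj ⟨_, hlt v⟩ ⟨_, hlt w⟩ ↔ G.Adj v w
    rw [← f.map_rel_iff, obstGraph_adj, obstGraph_adj]
    dsimp only
    have := hf v; have := hf w
    omega

end obstGraph

instance : DecidableRel twoP3.Adj := fun a b =>
  decidable_of_iff _ (SimpleGraph.fromRel_adj _ a b).symm

theorem twoP3_exists_adj : ∀ x : Fin 6, ∃ y, twoP3.Adj x y := by decide

theorem twoP3_exists_path_not_adj : ∀ x : Fin 6, ∃ p q s : Fin 6,
    twoP3.Adj q p ∧ twoP3.Adj q s ∧ p ≠ s ∧ ∀ t ∈ [p, q, s], ¬twoP3.Adj x t := by decide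

theorem twoP3_center_or_end : ∀ x : Fin 6,
    (∃ y z, y ≠ z ∧ twoP3.Adj x y ∧ twoP3.Adj x z) ∨
      (∃ y z, z ≠ x ∧ twoP3.Adj x y ∧ twoP3.Adj y z) := by decide

section twoP3Embedding

variable {r : ℕ} (f : twoP3 ↪g obstGraph r)

theorem exists_mod_three_eq_zero_of_twoP3_embedding {x : Fin 6} (hx : (f x).val % 3 = 1) :
    ∃ t, (f t).val % 3 = 0 ∧ (f t).val + 1 < (f x).val := by
  by_contra! hlow
  obtain ⟨p, q, s, hqp, hqs, hps, hfar⟩ := twoP3_exists_path_not_adj x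
  have hmod : ∀ t ∈ [p, q, s], (f t).val % 3 ≠ 0 := fun t ht h0 =>
    hfar t ht (f.map_rel_iff.mp (obstGraph_adj_of_mod_three hx h0 (hlow t h0)))
  exact hps <| f.injective <| obstGraph_eq_of_adj_of_adj (f.map_rel_iff.mpr hqp)
    (f.map_rel_iff.mpr hqs) (hmod q (by simp)) (hmod p (by simp)) (hmod s (by simp))

theorem twoP3_embedding_val_ne_one (x : Fin 6) : (f x).val ≠ 1 := fun hx => by
  obtain ⟨t, -, ht⟩ := exists_mod_three_eq_zero_of_twoP3_embedding f (x := x) (by omega)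
  omega

theorem twoP3_embedding_val_ne_zero (x : Fin 6) : (f x).val ≠ 0 := fun hx => by
  obtain ⟨y, hxy⟩ := twoP3_exists_adj x
  have := obstGraph_adj.mp (f.map_rel_iff.mpr hxy)
  have := twoP3_embedding_val_ne_one f y
  omega

theorem twoP3_embedding_val_ne_two (x : Fin 6) : (f x).val ≠ 2 := fun hx => by
  have hne : ∀ {y z}, y ≠ z → (f y).val ≠ (f z).val := fun hyz h =>
    hyz (f.injective (Fin.ext h))
  have hnbr : ∀ {y}, twoP3.Adj x y → (f y).val = 3 := fun {y} hxy => by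
    have := obstGraph_adj.mp (f.map_rel_iff.mpr hxy)
    have := twoP3_embedding_val_ne_one f y
    omega
  rcases twoP3_center_or_end x with ⟨y, z, hyz, hxy, hxz⟩ | ⟨y, z, hzx, hxy, hyz⟩
  · exact hne hyz ((hnbr hxy).trans (hnbr hxz).symm)
  · have hfz : (f z).val = 4 := by
      have := obstGraph_adj.mp (f.map_rel_iff.mpr hyz)
      have := hnbr hxy
      have := twoP3_embedding_val_ne_one f z
      have := hne hzx
      omega
    obtain ⟨t, ht0, htz⟩ := exists_mod_three_eq_zero_of_twoP3_embedding f (x := z) (by omega)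
    have := twoP3_embedding_val_ne_zero f t
    omega

theorem three_le_twoP3_embedding_val (x : Fin 6) : 3 ≤ (f x).val := by
  have := twoP3_embedding_val_ne_zero f x
  have := twoP3_embedding_val_ne_one f x
  have := twoP3_embedding_val_ne_two f x
  omega

end twoP3Embedding

theorem stmt_13 (r : ℕ) (hr : 2 ≤ r) :
    ¬ Nonempty (twoP3 ↪g obstGraph r) := by
  induction r, hr using Nat.le_induction with
  | base =>
    rintro ⟨f⟩
    simpa using Fintype.card_le_of_injective f f.injective
  | succ r _ ih =>
    rintro ⟨f⟩
    exact ih (nonempty_embedding_obstGraph_of_three_le f (three_le_twoP3_embedding_val f))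
end
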